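/- arXiv:2404.05511 — 3 statements merged into one kernel-verified Lean document; each statement's English description precedes it below -/
import Mathlib

section
/- The optimal solution map of the parametric least-distance problem is piecewise affine over critical regions: on each critical region Θ_A corresponding to an active set A satisfying LICQ, the map θ ↦ u*(θ) = -M_Aᵀ (M_A M_Aᵀ)⁻¹ d_A(θ) is affine in θ. -/
open Matrix

section AffineMulVec

variable {R : Type*} [CommRing R] {ι κ ν π : Type*} [Fintype π]

theorem Matrix.mulVec_comp_add (D : Matrix ι π R) (d₀ : ι → R) (f : κ → ι) (θ : π → R) :
    (D *ᵥ θ + d₀) ∘ f = D.submatrix f id *ᵥ θ + d₀ ∘ f :=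
  rfl

theorem Matrix.exists_mulVec_add_of_mulVec_comp [Fintype κ] {d : (π → R) → ι → R}
    (hd : ∃ (D : Matrix ι π R) (d₀ : ι → R), ∀ θ, d θ = D *ᵥ θ + d₀)
    (N : Matrix ν κ R) (f : κ → ι) :
    ∃ (G : Matrix ν π R) (g₀ : ν → R), ∀ θ, N *ᵥ (d θ ∘ f) = G *ᵥ θ + g₀ := by
  obtain ⟨D, d₀, hD⟩ := hd
  refine ⟨N * D.submatrix f id, N *ᵥ (d₀ ∘ f), fun θ => ?_⟩
  rw [hD, mulVec_comp_add, mulVec_add, mulVec_mulVec]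

end AffineMulVec

theorem stmt_10_general {p m n : ℕ}
    (d : (Fin p → ℝ) → Fin m → ℝ)
    (hd : ∃ (D : Matrix (Fin m) (Fin p) ℝ) (d₀ : Fin m → ℝ), ∀ θ, d θ = D.mulVec θ + d₀)
    (A : Finset (Fin m))
    (MA : Matrix A (Fin n) ℝ)
    (ustar : (Fin p → ℝ) → Fin n → ℝ)
    (hu : ∀ θ, ustar θ = -(MAᵀ.mulVec ((MA * MAᵀ)⁻¹.mulVec fun i : A => d θ i.1)))
    (ΘA : Set (Fin p → ℝ)) :
    ∃ (G : Matrix (Fin n) (Fin p) ℝ) (g₀ : Fin n → ℝ),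
      ∀ θ ∈ ΘA, ustar θ = G.mulVec θ + g₀ := by
  obtain ⟨G, g₀, hG⟩ := exists_mulVec_add_of_mulVec_comp hd (-(MAᵀ * (MA * MAᵀ)⁻¹)) Subtype.val
  refine ⟨G, g₀, fun θ _ => ?_⟩
  rw [hu, ← hG, neg_mulVec, mulVec_mulVec]
  rfl

/-- on the critical region `Θ_A` of an active set `A` satisfying LICQ,
the optimizer map `θ ↦ u*(θ) = -M_Aᵀ (M_A M_Aᵀ)⁻¹ d_A(θ)` is affine in `θ`. -/
theorem stmt_10 {p m n : ℕ}
    (M : Matrix (Fin m) (Fin n) ℝ) (d : (Fin p → ℝ) → Fin m → ℝ)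
    (hd : ∃ (D : Matrix (Fin m) (Fin p) ℝ) (d₀ : Fin m → ℝ), ∀ θ, d θ = D.mulVec θ + d₀)
    (A : Finset (Fin m))
    (MA : Matrix A (Fin n) ℝ) (hMA : MA = Matrix.of fun (i : A) j => M i.1 j)
    (hLICQ : LinearIndependent ℝ (fun i : A => M i.1))
    (lamA : (Fin p → ℝ) → A → ℝ)
    (hlam : ∀ θ, lamA θ = -((MA * MAᵀ)⁻¹.mulVec fun i : A => d θ i.1))
    (ustar : (Fin p → ℝ) → Fin n → ℝ)
    (hu : ∀ θ, ustar θ = -(MAᵀ.mulVec ((MA * MAᵀ)⁻¹.mulVec fun i : A => d θ i.1)))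
    (muBar : (Fin p → ℝ) → (Aᶜ : Finset (Fin m)) → ℝ)
    (hmu : ∀ θ, muBar θ = fun i : (Aᶜ : Finset (Fin m)) => d θ i.1 - M i.1 ⬝ᵥ ustar θ)
    (ΘA : Set (Fin p → ℝ)) (hΘA : ΘA = {θ | 0 ≤ lamA θ ∧ 0 ≤ muBar θ}) :
    ∃ (G : Matrix (Fin n) (Fin p) ℝ) (g₀ : Fin n → ℝ),
      ∀ θ ∈ ΘA, ustar θ = G.mulVec θ + g₀ :=
  stmt_10_general d hd A MA ustar hu ΘA
end

section
/- Suppose active sets A and Ã are both 'optimal' in the sense that their critical regions intersect: there exists θ̃ such that the KKT system with active set A and the KKT system with active set Ã are both solvable at θ̃. Then for any k ∈ Ã, the KKT system with active set A ∪ {k} is also solvable at θ̃; in particular the critical region Θ_{A∪{k}} is nonempty. -/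
open Matrix

/-- The KKT system of `min (1/2)‖u‖² s.t. M u ≤ dθ` with active set `A` is solvable. -/
def KKTSolvable {m n : ℕ} (M : Matrix (Fin m) (Fin n) ℝ) (dθ : Fin m → ℝ)
    (A : Finset (Fin m)) : Prop :=
  ∃ (u : Fin n → ℝ) (lam : Fin m → ℝ),
    u + Mᵀ.mulVec lam = 0 ∧
    (∀ i ∈ A, M.mulVec u i = dθ i) ∧ (∀ i ∈ A, 0 ≤ lam i) ∧
    (∀ i ∉ A, M.mulVec u i ≤ dθ i) ∧ (∀ i ∉ A, lam i = 0)

/-- Variational inequality: a KKT point `u` satisfies `0 ≤ u ⬝ᵥ (v - u)` for any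
feasible `v`. -/
lemma kkt_var_ineq {m n : ℕ} (M : Matrix (Fin m) (Fin n) ℝ) (dθ : Fin m → ℝ)
    (A : Finset (Fin m)) (u : Fin n → ℝ) (lam : Fin m → ℝ)
    (h0 : u + Mᵀ.mulVec lam = 0)
    (heq : ∀ i ∈ A, M.mulVec u i = dθ i)
    (hpos : ∀ i ∈ A, 0 ≤ lam i)
    (hz : ∀ i ∉ A, lam i = 0)
    (v : Fin n → ℝ) (hv : ∀ i, M.mulVec v i ≤ dθ i) :
    0 ≤ u ⬝ᵥ (v - u) := by
  have hu : u = -(Mᵀ.mulVec lam) := eq_neg_of_add_eq_zero_left h0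
  have key : (Mᵀ.mulVec lam) ⬝ᵥ (v - u) = lam ⬝ᵥ (M.mulVec (v - u)) := by
    rw [mulVec_transpose, ← dotProduct_mulVec]
  nth_rewrite 1 [hu]
  rw [neg_dotProduct, key]
  have hle : lam ⬝ᵥ (M.mulVec (v - u)) ≤ 0 := by
    unfold dotProduct
    apply Finset.sum_nonpos
    intro i _
    rw [mulVec_sub]
    by_cases hi : i ∈ A
    · have h1 := hv i
      have h2 := heq i hi
      have h3 := hpos i hi
      simp only [Pi.sub_apply]
      nlinarith
    · simp [hz i hi]
  linarith

/-- if the KKT systems for active sets `A` and `Ã` are both solvable at a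
parameter `θ̃`, then for any `k ∈ Ã` the KKT system for `A ∪ {k}` is also solvable at
`θ̃`; in particular the critical region `Θ_{A∪{k}}` is nonempty. -/
theorem stmt_11 {p m n : ℕ}
    (M : Matrix (Fin m) (Fin n) ℝ) (d : (Fin p → ℝ) → Fin m → ℝ)
    (A Atil : Finset (Fin m)) (θtil : Fin p → ℝ)
    (hA : KKTSolvable M (d θtil) A) (hAtil : KKTSolvable M (d θtil) Atil)
    (k : Fin m) (hk : k ∈ Atil) :
    KKTSolvable M (d θtil) (insert k A) ∧
      {θ : Fin p → ℝ | KKTSolvable M (d θ) (insert k A)}.Nonempty := by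
  obtain ⟨u, lam, h0, heq, hpos, hineq, hz⟩ := hA
  obtain ⟨ut, lamt, h0t, heqt, hpost, hineqt, hzt⟩ := hAtil
  have hufeas : ∀ i, M.mulVec u i ≤ d θtil i := by
    intro i; by_cases hi : i ∈ A
    · exact (heq i hi).le
    · exact hineq i hi
  have hutfeas : ∀ i, M.mulVec ut i ≤ d θtil i := by
    intro i; by_cases hi : i ∈ Atil
    · exact (heqt i hi).le
    · exact hineqt i hi
  have h1 := kkt_var_ineq M (d θtil) A u lam h0 heq hpos hz ut hutfeas
  have h2 := kkt_var_ineq M (d θtil) Atil ut lamt h0t heqt hpost hzt u hufeas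
  have hsum : u ⬝ᵥ (ut - u) + ut ⬝ᵥ (u - ut) = -((u - ut) ⬝ᵥ (u - ut)) := by
    simp only [dotProduct, Pi.sub_apply, ← Finset.sum_add_distrib, ← Finset.sum_neg_distrib]
    apply Finset.sum_congr rfl
    intros; ring
  have hself : (u - ut) ⬝ᵥ (u - ut) = 0 := by
    have hnn : 0 ≤ (u - ut) ⬝ᵥ (u - ut) :=
      Finset.sum_nonneg fun i _ => mul_self_nonneg _
    linarith
  have huut : u = ut := sub_eq_zero.mp (dotProduct_self_eq_zero.mp hself)
  have hk' : M.mulVec u k = d θtil k := by rw [huut]; exact heqt k hk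
  have hsol : KKTSolvable M (d θtil) (insert k A) := by
    refine ⟨u, lam, h0, ?_, ?_, ?_, ?_⟩
    · intro i hi
      rcases Finset.mem_insert.mp hi with h | h
      · subst h; exact hk'
      · exact heq i h
    · intro i hi
      by_cases hiA : i ∈ A
      · exact hpos i hiA
      · rw [hz i hiA]
    · intro i hi
      exact hineq i fun h => hi (Finset.mem_insert_of_mem h)
    · intro i hi
      exact hz i fun h => hi (Finset.mem_insert_of_mem h)
  exact ⟨hsol, ⟨θtil, hsol⟩⟩
end

section
/- Let A ⊆ {1,…,m} with |A| = n and M_A invertible (so LICQ holds and the active constraints determine u uniquely), and let Ã also satisfy LICQ. Suppose A and Ã are geometrically adjacent (their critical regions share a point θ̃) and suppose for some i ∈ Ã the matrix M_{A∪{i}} does not have full row rank. Then M_i is a linear combination of the rows {M_j}_{j ∈ A}, and the coefficients of constraints in A ∩ Ã in any such linear combination expressing M_i can be taken to involve some j ∈ A \ Ã; in particular, there exists j ∈ A \ Ã such that the rows {M_k}_{k ∈ A ∪ {i} \ {j}} are linearly independent. -/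
open Matrix

/-!
The rows of `A` are independent and adding row `i` destroys this, so `M i = ∑_{j ∈ A} c_j M_j`
with unique coefficients. Some `c_j` with `j ∈ A \ Ã` is nonzero: otherwise `M i` would lie in
the span of the rows of `A ∩ Ã ⊆ Ã \ {i}`, against LICQ for `Ã`. Exchanging such a `j` for `i`
keeps the rows independent, since by uniqueness of `c` the row `M i` is not in the span of the
rows of `A \ {j}`.
-/

open Submodule Set

namespace LinearIndepOn

variable {ι K V : Type*} [DivisionRing K] [AddCommGroup V] [Module K V] {v : ι → V}
  {s t : Set ι}

theorem exists_mem_diff_notMem_span_image_diff_singleton (hs : LinearIndepOn K v s) {x : V}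
    (hx : x ∈ span K (v '' s)) (hxt : x ∉ span K (v '' (s ∩ t))) :
    ∃ j ∈ s \ t, x ∉ span K (v '' (s \ {j})) := by
  obtain ⟨c, hc, rfl⟩ := Finsupp.mem_span_image_iff_linearCombination K |>.1 hx
  by_contra! h
  refine hxt (Finsupp.mem_span_image_iff_linearCombination K |>.2 ⟨c, fun j hj => ?_, rfl⟩)
  have hjs : j ∈ s := hc hj
  by_contra hjt
  obtain ⟨d, hd, hdc⟩ := Finsupp.mem_span_image_iff_linearCombination K |>.1
    (h j ⟨hjs, fun hjt' => hjt ⟨hjs, hjt'⟩⟩)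
  have hd_eq : d = c :=
    linearIndepOn_iffₛ.1 hs d (Finsupp.supported_mono sdiff_subset hd) c hc hdc
  have hdj : d j = 0 := Finsupp.notMem_support_iff.1 fun hj' => (hd hj').2 rfl
  exact Finsupp.mem_support_iff.1 hj (hd_eq ▸ hdj)

theorem insert_diff_singleton {i j : ι} (hs : LinearIndepOn K v s) (hi : i ∉ s) (hj : j ∈ s)
    (hij : v i ∉ span K (v '' (s \ {j}))) : LinearIndepOn K v (insert i s \ {j}) := by
  rw [insert_sdiff_of_notMem _ (fun h : i ∈ ({j} : Set ι) => hi (h ▸ hj))]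
  exact (hs.mono sdiff_subset).insert hij

theorem exists_mem_diff_linearIndepOn_exchange {i : ι} (hs : LinearIndepOn K v s)
    (ht : LinearIndepOn K v t) (hit : i ∈ t) (his : i ∉ s) (hspan : v i ∈ span K (v '' s)) :
    ∃ j ∈ s \ t, LinearIndepOn K v (insert i s \ {j}) := by
  have hst : s ∩ t ⊆ t \ {i} := fun k hk => ⟨hk.2, fun hki => his (hki ▸ hk.1)⟩
  have hnot : v i ∉ span K (v '' (s ∩ t)) := fun h =>
    ht.notMem_span hit (span_mono (image_mono hst) h)
  obtain ⟨j, hj, hij⟩ := hs.exists_mem_diff_notMem_span_image_diff_singleton hspan hnot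
  exact ⟨j, hj, hs.insert_diff_singleton his hj.1 hij⟩

end LinearIndepOn

theorem stmt_13_general {m n : ℕ}
    (M : Matrix (Fin m) (Fin n) ℝ)
    (A Atil : Finset (Fin m))
    (hA : LinearIndependent ℝ (fun j : A => M j.1))
    (hAtil : LinearIndependent ℝ (fun j : Atil => M j.1))
    (i : Fin m) (hi : i ∈ Atil)
    (hdep : ¬ LinearIndependent ℝ (fun j : (insert i A : Finset (Fin m)) => M j.1)) :
    M i ∈ Submodule.span ℝ (Set.range fun j : A => M j.1) ∧
      ∃ j ∈ A \ Atil,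
        LinearIndependent ℝ (fun k : ((insert i A).erase j : Finset (Fin m)) => M k.1) := by
  have hiA : i ∉ A := fun h => hdep (by rwa [Finset.insert_eq_of_mem h])
  have hAon : LinearIndepOn ℝ M (A : Set (Fin m)) := hA
  have hdep' : ¬ LinearIndepOn ℝ M (insert i (A : Set (Fin m))) := by
    rwa [← Finset.coe_insert]
  have hspan : M i ∈ span ℝ (M '' A) := hAon.mem_span_iff.2 fun h => absurd h hdep'
  obtain ⟨j, hj, hli⟩ := hAon.exists_mem_diff_linearIndepOn_exchange hAtil hi hiA hspan
  refine ⟨image_eq_range M A ▸ hspan, j, by simpa using hj, ?_⟩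
  change LinearIndepOn ℝ M ↑((insert i A).erase j)
  rwa [Finset.coe_erase, Finset.coe_insert]

/-- if `|A| = n`, `M_A` is invertible (its rows are linearly independent),
`Ã` satisfies LICQ, `A` and `Ã` are geometrically adjacent, and adding `i ∈ Ã` to `A`
breaks LICQ, then `M_i` lies in the span of the rows of `M_A`, and there exists
`j ∈ A \ Ã` such that the rows indexed by `A ∪ {i} \ {j}` are linearly independent. -/
theorem stmt_13 {p m n : ℕ}
    (M : Matrix (Fin m) (Fin n) ℝ) (d : (Fin p → ℝ) → Fin m → ℝ)
    (A Atil : Finset (Fin m)) (hcard : A.card = n)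
    (hA : LinearIndependent ℝ (fun j : A => M j.1))
    (hAtil : LinearIndependent ℝ (fun j : Atil => M j.1))
    (hadj : ∃ θ : Fin p → ℝ, KKTSolvable M (d θ) A ∧ KKTSolvable M (d θ) Atil)
    (i : Fin m) (hi : i ∈ Atil)
    (hdep : ¬ LinearIndependent ℝ (fun j : (insert i A : Finset (Fin m)) => M j.1)) :
    M i ∈ Submodule.span ℝ (Set.range fun j : A => M j.1) ∧
      ∃ j ∈ A \ Atil,
        LinearIndependent ℝ (fun k : ((insert i A).erase j : Finset (Fin m)) => M k.1) :=
  stmt_13_general M A Atil hA hAtil i hi hdep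
end
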